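/- arXiv:math/0211147 — 5 statements merged into one kernel-verified Lean document; each statement's English description precedes it below -/
import Mathlib

section
/- Let N(v) = Σ_{j∈J} m_j·|D(v,w_j)| be a norm of Culler–Shalen type on ℝ², assume there exist j, k ∈ J with D(w_j,w_k) ≠ 0, and let α, β ∈ ℤ² be linearly independent. Suppose that N(α)·|D(β,w_j)| = N(β)·|D(α,w_j)| holds for every j ∈ J. Then D(α,w_j) ≠ 0 for every j ∈ J, and there exist j, k ∈ J with D(w_j,w_k) ≠ 0 such that: every w_l (l ∈ J) equals w_j, −w_j, w_k, or −w_k; N(α)·D(β,w_j) = N(β)·D(α,w_j); and N(α)·D(β,w_k) = −N(β)·D(α,w_k). (That is, there are exactly two distinct strict boundary classes, with slopes −t and +t with respect to (α,β), where t = N(β)/N(α).) -/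
/-- `D(v,w) = v₁w₂ − v₂w₁` for `v, w ∈ ℝ²`. -/
noncomputable def Dd (v w : ℝ × ℝ) : ℝ := v.1 * w.2 - v.2 * w.1

/-- Inclusion of the lattice `ℤ²` into `ℝ²`. -/
def toR (w : ℤ × ℤ) : ℝ × ℝ := ((w.1 : ℝ), (w.2 : ℝ))

lemma Dd_zero_left (v : ℝ × ℝ) : Dd 0 v = 0 := by simp [Dd]

lemma Dd_zero_right (v : ℝ × ℝ) : Dd v 0 = 0 := by simp [Dd]

lemma Dd_swap (u v : ℝ × ℝ) : Dd u v = -Dd v u := by simp [Dd]; ring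

/-- If `x ≠ 0` is orthogonal (w.r.t. `D`) to both `u` and `v`, then `D(u,v) = 0`. -/
lemma Dd_key (x u v : ℝ × ℝ) (hx : x ≠ 0) (h1 : Dd x u = 0) (h2 : Dd x v = 0) :
    Dd u v = 0 := by
  have e1 : Dd u v * x.1 = Dd x v * u.1 - Dd x u * v.1 := by unfold Dd; ring
  have e2 : Dd u v * x.2 = Dd x v * u.2 - Dd x u * v.2 := by unfold Dd; ring
  rw [h1, h2] at e1 e2
  simp only [zero_mul, sub_zero, sub_self] at e1 e2
  rcases mul_eq_zero.mp e1 with h | h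
  · exact h
  rcases mul_eq_zero.mp e2 with h' | h'
  · exact h'
  · exact absurd (Prod.ext h h') hx

lemma prim_toR_ne {v : ℤ × ℤ} (h : Int.gcd v.1 v.2 = 1) : toR v ≠ 0 := by
  intro h0
  have h1 : (v.1 : ℝ) = 0 := congrArg Prod.fst h0
  have h2 : (v.2 : ℝ) = 0 := congrArg Prod.snd h0
  have h1' : v.1 = 0 := by exact_mod_cast h1
  have h2' : v.2 = 0 := by exact_mod_cast h2
  rw [h1', h2'] at h
  simp at h

/-- Two primitive integer vectors with vanishing determinant are equal up to sign. -/
lemma prim_eq_or_neg (u v : ℤ × ℤ) (hu : Int.gcd u.1 u.2 = 1)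
    (hv : Int.gcd v.1 v.2 = 1) (h : u.1 * v.2 = u.2 * v.1) : u = v ∨ u = -v := by
  obtain ⟨a, b, hab⟩ := Int.isCoprime_iff_gcd_eq_one.mpr hu
  set c := a * v.1 + b * v.2 with hc
  have h1 : c * u.1 = v.1 := by rw [hc]; linear_combination v.1 * hab + b * h
  have h2 : c * u.2 = v.2 := by rw [hc]; linear_combination v.2 * hab - a * h
  have hg : Int.gcd v.1 v.2 = c.natAbs * Int.gcd u.1 u.2 := by
    rw [← h1, ← h2]; exact Int.gcd_mul_left c u.1 u.2
  rw [hu, hv, mul_one] at hg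
  have hc1 : c = 1 ∨ c = -1 := by
    rcases Int.natAbs_eq c with he | he <;> rw [he, ← hg] <;> simp
  rcases hc1 with he | he
  · left
    rw [he, one_mul] at h1 h2
    exact Prod.ext h1 h2
  · right
    rw [he] at h1 h2
    apply Prod.ext
    · show u.1 = -v.1; linarith [h1]
    · show u.2 = -v.2; linarith [h2]

lemma prim_eq_or_neg' (u v : ℤ × ℤ) (hu : Int.gcd u.1 u.2 = 1)
    (hv : Int.gcd v.1 v.2 = 1) (h : Dd (toR u) (toR v) = 0) : u = v ∨ u = -v := by
  apply prim_eq_or_neg u v hu hv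
  have h' : (u.1 : ℝ) * v.2 - (u.2 : ℝ) * v.1 = 0 := h
  have := sub_eq_zero.mp h'
  exact_mod_cast this

/-- Equality case of the dichotomy. If
`N(α)·|D(β,w_j)| = N(β)·|D(α,w_j)|` for every `j`, then `D(α,w_j) ≠ 0` for all `j`,
and there are `j, k` with `D(w_j,w_k) ≠ 0` such that every `w_l` is `±w_j` or `±w_k`,
with `N(α)·D(β,w_j) = N(β)·D(α,w_j)` and `N(α)·D(β,w_k) = −N(β)·D(α,w_k)`;
i.e. there are exactly two distinct strict boundary classes, of slopes `∓t`,
`t = N(β)/N(α)`, with respect to `(α,β)`. -/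
theorem culler_shalen_equality_case
    {J : Type*} [Fintype J] [Nonempty J]
    (m : J → ℝ) (hm : ∀ j, 0 < m j)
    (w : J → ℤ × ℤ) (hw : ∀ j, Int.gcd (w j).1 (w j).2 = 1)
    (hnorm : ∃ j k, Dd (toR (w j)) (toR (w k)) ≠ 0)
    (α β : ℤ × ℤ) (hind : Dd (toR α) (toR β) ≠ 0)
    (N : (ℝ × ℝ) → ℝ) (hN : ∀ v, N v = ∑ j, m j * |Dd v (toR (w j))|)
    (heq : ∀ j, N (toR α) * |Dd (toR β) (toR (w j))| =
      N (toR β) * |Dd (toR α) (toR (w j))|) :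
    (∀ j, Dd (toR α) (toR (w j)) ≠ 0) ∧
    ∃ j k, Dd (toR (w j)) (toR (w k)) ≠ 0 ∧
      (∀ l, w l = w j ∨ w l = -w j ∨ w l = w k ∨ w l = -w k) ∧
      N (toR α) * Dd (toR β) (toR (w j)) = N (toR β) * Dd (toR α) (toR (w j)) ∧
      N (toR α) * Dd (toR β) (toR (w k)) = -(N (toR β) * Dd (toR α) (toR (w k))) := by
  have hα0 : toR α ≠ 0 := fun h0 => hind (h0 ▸ Dd_zero_left _)
  have hβ0 : toR β ≠ 0 := fun h0 => hind (h0 ▸ Dd_zero_right _)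
  obtain ⟨j0, k0, hjk0⟩ := hnorm
  -- N(α) > 0
  have hAex : Dd (toR α) (toR (w j0)) ≠ 0 ∨ Dd (toR α) (toR (w k0)) ≠ 0 := by
    by_contra hcon
    push_neg at hcon
    exact hjk0 (Dd_key _ _ _ hα0 hcon.1 hcon.2)
  have hBex : Dd (toR β) (toR (w j0)) ≠ 0 ∨ Dd (toR β) (toR (w k0)) ≠ 0 := by
    by_contra hcon
    push_neg at hcon
    exact hjk0 (Dd_key _ _ _ hβ0 hcon.1 hcon.2)
  have hNαpos : 0 < N (toR α) := by
    rw [hN]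
    apply Finset.sum_pos' (fun j _ => mul_nonneg (hm j).le (abs_nonneg _))
    rcases hAex with h | h
    · exact ⟨j0, Finset.mem_univ _, mul_pos (hm j0) (abs_pos.mpr h)⟩
    · exact ⟨k0, Finset.mem_univ _, mul_pos (hm k0) (abs_pos.mpr h)⟩
  have hNβpos : 0 < N (toR β) := by
    rw [hN]
    apply Finset.sum_pos' (fun j _ => mul_nonneg (hm j).le (abs_nonneg _))
    rcases hBex with h | h
    · exact ⟨j0, Finset.mem_univ _, mul_pos (hm j0) (abs_pos.mpr h)⟩
    · exact ⟨k0, Finset.mem_univ _, mul_pos (hm k0) (abs_pos.mpr h)⟩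
  -- all D(α, w_j) ≠ 0
  have hA : ∀ j, Dd (toR α) (toR (w j)) ≠ 0 := by
    intro j hAj
    have h1 := heq j
    rw [hAj] at h1
    simp only [abs_zero, mul_zero] at h1
    have hBj : Dd (toR β) (toR (w j)) = 0 := by
      rcases mul_eq_zero.mp h1 with h | h
      · exact absurd h hNαpos.ne'
      · exact abs_eq_zero.mp h
    have hwj := prim_toR_ne (hw j)
    have hα' : Dd (toR (w j)) (toR α) = 0 := by rw [Dd_swap, hAj, neg_zero]
    have hβ' : Dd (toR (w j)) (toR β) = 0 := by rw [Dd_swap, hBj, neg_zero]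
    exact hind (Dd_key _ _ _ hwj hα' hβ')
  set t := N (toR β) / N (toR α) with htdef
  have ht : 0 < t := div_pos hNβpos hNαpos
  have hBt : ∀ j, Dd (toR β) (toR (w j)) = t * Dd (toR α) (toR (w j)) ∨
      Dd (toR β) (toR (w j)) = -(t * Dd (toR α) (toR (w j))) := by
    intro j
    apply abs_eq_abs.mp
    rw [abs_mul, abs_of_pos ht, htdef]
    rw [div_mul_eq_mul_div, eq_div_iff hNαpos.ne']
    linarith [heq j]
  -- x⁺ := β - tα kills the "plus" classes, x⁻ := β + tα kills the "minus" classes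
  set xp : ℝ × ℝ := ((toR β).1 - t * (toR α).1, (toR β).2 - t * (toR α).2) with hxp
  set xm : ℝ × ℝ := ((toR β).1 + t * (toR α).1, (toR β).2 + t * (toR α).2) with hxm
  have hxpval : ∀ u : ℝ × ℝ, Dd xp u = Dd (toR β) u - t * Dd (toR α) u := by
    intro u; rw [hxp]; unfold Dd; ring
  have hxmval : ∀ u : ℝ × ℝ, Dd xm u = Dd (toR β) u + t * Dd (toR α) u := by
    intro u; rw [hxm]; unfold Dd; ring
  have hxp0 : xp ≠ 0 := by
    intro h0
    apply hind
    have h1 : Dd (toR α) xp = Dd (toR α) (toR β) := by rw [hxp]; unfold Dd; ring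
    rw [h0, Dd_zero_right] at h1
    exact h1.symm
  have hxm0 : xm ≠ 0 := by
    intro h0
    apply hind
    have h1 : Dd (toR α) xm = Dd (toR α) (toR β) := by rw [hxm]; unfold Dd; ring
    rw [h0, Dd_zero_right] at h1
    exact h1.symm
  have hplus : ∃ j, Dd (toR β) (toR (w j)) = t * Dd (toR α) (toR (w j)) := by
    by_contra hcon
    push_neg at hcon
    have hall : ∀ j, Dd xm (toR (w j)) = 0 := by
      intro j
      rw [hxmval]
      have := (hBt j).resolve_left (hcon j)
      linarith
    exact hjk0 (Dd_key _ _ _ hxm0 (hall j0) (hall k0))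
  have hminus : ∃ j, Dd (toR β) (toR (w j)) = -(t * Dd (toR α) (toR (w j))) := by
    by_contra hcon
    push_neg at hcon
    have hall : ∀ j, Dd xp (toR (w j)) = 0 := by
      intro j
      rw [hxpval]
      have := (hBt j).resolve_right (hcon j)
      linarith
    exact hjk0 (Dd_key _ _ _ hxp0 (hall j0) (hall k0))
  obtain ⟨j, hj⟩ := hplus
  obtain ⟨k, hk⟩ := hminus
  have hpj : Dd xp (toR (w j)) = 0 := by rw [hxpval]; linarith
  have hmk : Dd xm (toR (w k)) = 0 := by rw [hxmval]; linarith
  have hjkne : Dd (toR (w j)) (toR (w k)) ≠ 0 := by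
    intro h0
    have hwj0 := prim_toR_ne (hw j)
    have hjp : Dd (toR (w j)) xp = 0 := by rw [Dd_swap, hpj, neg_zero]
    have hxpk : Dd xp (toR (w k)) = 0 := Dd_key _ _ _ hwj0 hjp h0
    rw [hxpval] at hxpk
    have hAk := hA k
    have : t * Dd (toR α) (toR (w k)) = 0 := by linarith
    rcases mul_eq_zero.mp this with h | h
    · exact ht.ne' h
    · exact hAk h
  refine ⟨hA, j, k, hjkne, ?_, ?_, ?_⟩
  · intro l
    rcases hBt l with h | h
    · have hpl : Dd xp (toR (w l)) = 0 := by rw [hxpval]; linarith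
      have h0 : Dd (toR (w l)) (toR (w j)) = 0 := by
        have := Dd_key _ _ _ hxp0 hpl hpj
        exact this
      rcases prim_eq_or_neg' _ _ (hw l) (hw j) h0 with h' | h'
      · exact Or.inl h'
      · exact Or.inr (Or.inl h')
    · have hml : Dd xm (toR (w l)) = 0 := by rw [hxmval]; linarith
      have h0 : Dd (toR (w l)) (toR (w k)) = 0 := Dd_key _ _ _ hxm0 hml hmk
      rcases prim_eq_or_neg' _ _ (hw l) (hw k) h0 with h' | h'
      · exact Or.inr (Or.inr (Or.inl h'))
      · exact Or.inr (Or.inr (Or.inr h'))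
  · rw [hj, htdef]
    field_simp
  · rw [hk, htdef]
    field_simp
end

section
/- Let N(v) = Σ_{j∈J} m_j·|D(v,w_j)| be a norm of Culler–Shalen type on ℝ², assume there exist j, k ∈ J with D(w_j,w_k) ≠ 0, and let α, β ∈ ℤ² be linearly independent. If c is a real number with N(β) ≤ c, then there exists j ∈ J with N(α)·|D(β,w_j)| ≤ c·|D(α,w_j)|. -/
theorem exists_le_of_weighted_sum_le {ι R : Type*} [Fintype ι] [Nonempty ι]
    [Semiring R] [LinearOrder R] [IsStrictOrderedRing R]
    {m a b : ι → R} (hm : ∀ i, 0 < m i) (h : ∑ i, m i * a i ≤ ∑ i, m i * b i) :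
    ∃ i, a i ≤ b i := by
  obtain ⟨i, -, hi⟩ := Finset.exists_le_of_sum_le Finset.univ_nonempty h
  exact ⟨i, le_of_mul_le_mul_left hi (hm i)⟩

theorem boundary_class_of_norm_bound_general
    {J : Type*} [Fintype J] [Nonempty J]
    (m : J → ℝ) (hm : ∀ j, 0 < m j)
    (w : J → ℤ × ℤ)
    (α β : ℤ × ℤ)
    (N : (ℝ × ℝ) → ℝ) (hN : ∀ v, N v = ∑ j, m j * |Dd v (toR (w j))|)
    (c : ℝ) (hc : N (toR β) ≤ c) :
    ∃ j, N (toR α) * |Dd (toR β) (toR (w j))| ≤ c * |Dd (toR α) (toR (w j))| := by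
  have weighted_sum_eq (t : ℝ) (v : ℝ × ℝ) :
      ∑ j, m j * (t * |Dd v (toR (w j))|) = t * N v := by
    rw [hN, Finset.mul_sum]
    exact Finset.sum_congr rfl fun j _ => by ring
  have hNα : 0 ≤ N (toR α) := by
    rw [hN]
    exact Finset.sum_nonneg fun j _ => mul_nonneg (hm j).le (abs_nonneg _)
  refine exists_le_of_weighted_sum_le hm ?_
  calc ∑ j, m j * (N (toR α) * |Dd (toR β) (toR (w j))|)
      = N (toR α) * N (toR β) := weighted_sum_eq _ _
    _ ≤ N (toR α) * c := mul_le_mul_of_nonneg_left hc hNα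
    _ = ∑ j, m j * (c * |Dd (toR α) (toR (w j))|) := by rw [weighted_sum_eq, mul_comm]

/-- For a norm of Culler–Shalen type `N(v) = Σ_j m_j·|D(v,w_j)|`
(with some `D(w_j,w_k) ≠ 0`) and linearly independent `α, β ∈ ℤ²`, if `N(β) ≤ c`
then there is `j ∈ J` with `N(α)·|D(β,w_j)| ≤ c·|D(α,w_j)|`. -/
theorem boundary_class_of_norm_bound
    {J : Type*} [Fintype J] [Nonempty J]
    (m : J → ℝ) (hm : ∀ j, 0 < m j)
    (w : J → ℤ × ℤ) (hw : ∀ j, Int.gcd (w j).1 (w j).2 = 1)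
    (hnorm : ∃ j k, Dd (toR (w j)) (toR (w k)) ≠ 0)
    (α β : ℤ × ℤ) (hind : Dd (toR α) (toR β) ≠ 0)
    (N : (ℝ × ℝ) → ℝ) (hN : ∀ v, N v = ∑ j, m j * |Dd v (toR (w j))|)
    (c : ℝ) (hc : N (toR β) ≤ c) :
    ∃ j, N (toR α) * |Dd (toR β) (toR (w j))| ≤ c * |Dd (toR α) (toR (w j))| :=
  boundary_class_of_norm_bound_general m hm w α β N hN c hc
end

section
/- Let N(v) = Σ_{j∈J} m_j·|D(v,w_j)| be a norm of Culler–Shalen type on ℝ² in which w_j = (p_j, q_j) with q_j ≥ 1 for every j ∈ J, and assume there exist j, k ∈ J with D(w_j,w_k) ≠ 0. Let μ = (1,0), and suppose β = (a,b) equals w_{j₀} for some j₀ ∈ J (so b = q_{j₀} ≥ 1). Then max_{j∈J} (p_j/q_j) − min_{j∈J} (p_j/q_j) > N(β)/(b·N(μ)). -/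
/-!
Writing `D(v, w) = v₂ w₂ (v₁/v₂ - w₁/w₂)`, the norm of `β = w_{j₀}` becomes
`N(β) = b · Σ_j m_j q_j |r_β - r_j|`, while `N(μ) = Σ_j m_j q_j`. So `N(β) / (b N(μ))` is a weighted
average of the distances `|r_β - r_j|`, each at most `diam B`; the average is strictly smaller
because the term `j = j₀` vanishes while `diam B > 0` (two slopes differ since some `D(w_j, w_k) ≠ 0`).
-/

open Finset

lemma Dd_eq_mul_sub_div {v w : ℝ × ℝ} (hv : v.2 ≠ 0) (hw : w.2 ≠ 0) :
    Dd v w = v.2 * w.2 * (v.1 / v.2 - w.1 / w.2) := by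
  unfold Dd
  field_simp

lemma Dd_one_zero (w : ℝ × ℝ) : Dd (1, 0) w = w.2 := by
  simp [Dd]

section SupInf

variable {ι α : Type*} {s : Finset ι} (hs : s.Nonempty) (f : ι → α) {i j : ι}

lemma Finset.abs_sub_le_sup'_sub_inf' [AddCommGroup α] [LinearOrder α] [IsOrderedAddMonoid α]
    (hi : i ∈ s) (hj : j ∈ s) : |f i - f j| ≤ s.sup' hs f - s.inf' hs f :=
  abs_sub_le_iff.2 ⟨sub_le_sub (le_sup' f hi) (inf'_le f hj),
    sub_le_sub (le_sup' f hj) (inf'_le f hi)⟩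

lemma Finset.sup'_sub_inf'_pos [AddCommGroup α] [LinearOrder α] [IsOrderedAddMonoid α]
    (hi : i ∈ s) (hj : j ∈ s) (hne : f i ≠ f j) : 0 < s.sup' hs f - s.inf' hs f :=
  (abs_sub_pos.2 hne).trans_le (abs_sub_le_sup'_sub_inf' hs f hi hj)

lemma Finset.sum_mul_abs_sub_lt_sup'_sub_inf'_mul_sum [CommRing α] [LinearOrder α]
    [IsStrictOrderedRing α] {c : ι → α} (hc : ∀ j ∈ s, 0 < c j) (hi : i ∈ s)
    (hdiam : 0 < s.sup' hs f - s.inf' hs f) :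
    ∑ j ∈ s, c j * |f i - f j| < (s.sup' hs f - s.inf' hs f) * ∑ j ∈ s, c j := by
  rw [mul_sum]
  refine sum_lt_sum (fun j hj => ?_) ⟨i, hi, ?_⟩
  · rw [mul_comm _ (c j)]
    exact mul_le_mul_of_nonneg_left (abs_sub_le_sup'_sub_inf' hs f hi hj) (hc j hj).le
  · simpa using mul_pos hdiam (hc i hi)

end SupInf

theorem diameter_of_boundary_slopes_general
    {J : Type*} [Fintype J] [Nonempty J]
    (m : J → ℝ) (hm : ∀ j, 0 < m j)
    (w : J → ℤ × ℤ)
    (hq : ∀ j, 1 ≤ (w j).2)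
    (hnorm : ∃ j k, Dd (toR (w j)) (toR (w k)) ≠ 0)
    (N : (ℝ × ℝ) → ℝ) (hN : ∀ v, N v = ∑ j, m j * |Dd v (toR (w j))|)
    (a b : ℤ) (j₀ : J) (hβ : w j₀ = (a, b)) :
    N (toR (a, b)) / ((b : ℝ) * N (toR (1, 0))) <
      Finset.univ.sup' Finset.univ_nonempty (fun j => ((w j).1 : ℝ) / ((w j).2 : ℝ)) -
        Finset.univ.inf' Finset.univ_nonempty (fun j => ((w j).1 : ℝ) / ((w j).2 : ℝ)) := by
  set slope : J → ℝ := fun j => ((w j).1 : ℝ) / ((w j).2 : ℝ)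
  have hq' (j : J) : (0 : ℝ) < (w j).2 := by exact_mod_cast hq j
  have hb : (0 : ℝ) < b := by simpa [hβ] using hq' j₀
  have hdiam : 0 < univ.sup' univ_nonempty slope - univ.inf' univ_nonempty slope := by
    obtain ⟨j, k, hjk⟩ := hnorm
    refine sup'_sub_inf'_pos _ slope (mem_univ j) (mem_univ k) fun h => hjk ?_
    rw [Dd_eq_mul_sub_div (hq' j).ne' (hq' k).ne']
    simp [toR, slope, h]
  have hNμ : N (toR (1, 0)) = ∑ j, m j * (w j).2 := by
    simp only [hN, toR, Int.cast_one, Int.cast_zero, Dd_one_zero, abs_of_pos (hq' _)]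
  have hNβ : N (toR (a, b)) = b * ∑ j, m j * (w j).2 * |slope j₀ - slope j| := by
    rw [hN, mul_sum]
    refine sum_congr rfl fun j _ => ?_
    rw [Dd_eq_mul_sub_div hb.ne' (hq' j).ne', abs_mul]
    simp only [toR, slope, hβ]
    rw [abs_of_pos (mul_pos hb (hq' j))]
    ring
  have hweights : ∀ j ∈ univ, 0 < m j * (w j).2 := fun j _ => mul_pos (hm j) (hq' j)
  rw [hNβ, hNμ, mul_div_mul_left _ _ hb.ne', div_lt_iff₀ (sum_pos hweights univ_nonempty)]
  exact sum_mul_abs_sub_lt_sup'_sub_inf'_mul_sum _ slope hweights (mem_univ j₀) hdiam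

/-- For a norm of Culler–Shalen type `N(v) = Σ_j m_j·|D(v,w_j)|` in
which every `w_j = (p_j, q_j)` has `q_j ≥ 1` (i.e. `∞` is not a boundary slope),
with some `D(w_j,w_k) ≠ 0`, if `β = (a,b)` equals `w_{j₀}` for some `j₀`, then the
diameter of the set of slopes `p_j/q_j` exceeds `N(β)/(b·N(μ))`, where `μ = (1,0)`. -/
theorem diameter_of_boundary_slopes
    {J : Type*} [Fintype J] [Nonempty J]
    (m : J → ℝ) (hm : ∀ j, 0 < m j)
    (w : J → ℤ × ℤ) (hw : ∀ j, Int.gcd (w j).1 (w j).2 = 1)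
    (hq : ∀ j, 1 ≤ (w j).2)
    (hnorm : ∃ j k, Dd (toR (w j)) (toR (w k)) ≠ 0)
    (N : (ℝ × ℝ) → ℝ) (hN : ∀ v, N v = ∑ j, m j * |Dd v (toR (w j))|)
    (a b : ℤ) (j₀ : J) (hβ : w j₀ = (a, b)) :
    N (toR (a, b)) / ((b : ℝ) * N (toR (1, 0))) <
      Finset.univ.sup' Finset.univ_nonempty (fun j => ((w j).1 : ℝ) / ((w j).2 : ℝ)) -
        Finset.univ.inf' Finset.univ_nonempty (fun j => ((w j).1 : ℝ) / ((w j).2 : ℝ)) :=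
  diameter_of_boundary_slopes_general m hm w hq hnorm N hN a b j₀ hβ
end

section
/- Let N(v) = Σ_{j∈J} m_j·|D(v,w_j)| be a norm of Culler–Shalen type on ℝ², assume there exist j, k ∈ J with D(w_j,w_k) ≠ 0, and let α, β ∈ ℤ² be linearly independent. Suppose L' is an additive subgroup of ℤ² of finite index q with β ∈ L', and that N(β) ≤ N(γ) for every nonzero γ ∈ L'. Then there exists j ∈ J with |D(β,w_j)| ≤ q·|D(α,w_j)|. -/
/-! If every `|D(β, w_j)|` exceeded `q·|D(α, w_j)|`, then, the weights `m_j` being positive,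
`N(β) > q·N(α) = N(qα)`. But `qα` is a nonzero element of `L'`, since a subgroup of index `q`
contains `q` times every element, contradicting the minimality of `N(β)` on `L'`. -/

theorem Dd_smul_left (c : ℝ) (v w : ℝ × ℝ) : Dd (c • v) w = c * Dd v w := by
  simp only [Dd, Prod.smul_fst, Prod.smul_snd, smul_eq_mul]
  ring

theorem toR_nsmul (n : ℕ) (a : ℤ × ℤ) : toR (n • a) = (n : ℝ) • toR a := by
  ext <;> simp [toR]

theorem ne_zero_of_Dd_toR_ne_zero {a : ℤ × ℤ} {v : ℝ × ℝ} (h : Dd (toR a) v ≠ 0) : a ≠ 0 := by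
  rintro rfl
  simp [Dd, toR] at h

theorem exists_le_of_sum_mul_le_sum_mul {J : Type*} [Fintype J] [Nonempty J] {m a b : J → ℝ}
    (hm : ∀ j, 0 < m j) (h : ∑ j, m j * a j ≤ ∑ j, m j * b j) : ∃ j, a j ≤ b j := by
  obtain ⟨j, -, hj⟩ := Finset.exists_le_of_sum_le Finset.univ_nonempty h
  exact ⟨j, le_of_mul_le_mul_left hj (hm j)⟩

theorem boundary_class_of_sublattice_min_norm_general
    {J : Type*} [Fintype J] [Nonempty J]
    (m : J → ℝ) (hm : ∀ j, 0 < m j)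
    (w : J → ℤ × ℤ)
    (α β : ℤ × ℤ) (hind : Dd (toR α) (toR β) ≠ 0)
    (N : (ℝ × ℝ) → ℝ) (hN : ∀ v, N v = ∑ j, m j * |Dd v (toR (w j))|)
    (L' : AddSubgroup (ℤ × ℤ)) (q : ℕ) (hq : L'.index = q) (hq0 : q ≠ 0)
    (hmin : ∀ γ ∈ L', γ ≠ 0 → N (toR β) ≤ N (toR γ)) :
    ∃ j, |Dd (toR β) (toR (w j))| ≤ (q : ℝ) * |Dd (toR α) (toR (w j))| := by
  have hqα_mem : q • α ∈ L' := hq ▸ L'.nsmul_index_mem α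
  have hqα_ne : q • α ≠ 0 := smul_ne_zero hq0 (ne_zero_of_Dd_toR_ne_zero hind)
  have hle := hmin _ hqα_mem hqα_ne
  rw [hN, hN, toR_nsmul] at hle
  simp only [Dd_smul_left, abs_mul, Nat.abs_cast] at hle
  exact exists_le_of_sum_mul_le_sum_mul hm hle

/-- For a norm of Culler–Shalen type `N(v) = Σ_j m_j·|D(v,w_j)|`
(with some `D(w_j,w_k) ≠ 0`) and linearly independent `α, β ∈ ℤ²`, if `β` lies in
an additive subgroup `L'` of `ℤ²` of finite index `q` and `β` has minimal norm
among nonzero elements of `L'`, then there is `j ∈ J` with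
`|D(β,w_j)| ≤ q·|D(α,w_j)|`. -/
theorem boundary_class_of_sublattice_min_norm
    {J : Type*} [Fintype J] [Nonempty J]
    (m : J → ℝ) (hm : ∀ j, 0 < m j)
    (w : J → ℤ × ℤ) (hw : ∀ j, Int.gcd (w j).1 (w j).2 = 1)
    (hnorm : ∃ j k, Dd (toR (w j)) (toR (w k)) ≠ 0)
    (α β : ℤ × ℤ) (hind : Dd (toR α) (toR β) ≠ 0)
    (N : (ℝ × ℝ) → ℝ) (hN : ∀ v, N v = ∑ j, m j * |Dd v (toR (w j))|)
    (L' : AddSubgroup (ℤ × ℤ)) (q : ℕ) (hq : L'.index = q) (hq0 : q ≠ 0)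
    (hβ : β ∈ L')
    (hmin : ∀ γ ∈ L', γ ≠ 0 → N (toR β) ≤ N (toR γ)) :
    ∃ j, |Dd (toR β) (toR (w j))| ≤ (q : ℝ) * |Dd (toR α) (toR (w j))| :=
  boundary_class_of_sublattice_min_norm_general m hm w α β hind N hN L' q hq hq0 hmin
end

section
/- Let N(v) = Σ_{j∈J} m_j·|D(v,w_j)| be a norm of Culler–Shalen type on ℝ² with w_j = (p_j, q_j), and assume there exist j, k ∈ J with D(w_j,w_k) ≠ 0. Let α = (1,0) and β = (a,b) ∈ ℤ² with b ≥ 1. Suppose there exists j₀ ∈ J with N(α)·|D(β,w_{j₀})| ≠ N(β)·|D(α,w_{j₀})|. Then: (i) there exists j ∈ J with q_j ≠ 0 and |p_j/q_j − a/b| < N(β)/(b·N(α)); and (ii) there exists k ∈ J with either q_k = 0, or q_k ≠ 0 and |p_k/q_k − a/b| > N(β)/(b·N(α)). -/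
/-- meridian-coordinate form of case (1) of the main theorem. Let
`N(v) = Σ_j m_j·|D(v,w_j)|` be a norm of Culler–Shalen type (some
`D(w_j,w_k) ≠ 0`), `α = (1,0)`, `β = (a,b)` with `b ≥ 1`. If
`N(α)·|D(β,w_{j₀})| ≠ N(β)·|D(α,w_{j₀})|` for some `j₀`, then (i) there is `j`
with `q_j ≠ 0` and `|p_j/q_j − a/b| < N(β)/(b·N(α))`, and (ii) there is `k` with
`q_k = 0`, or `q_k ≠ 0` and `|p_k/q_k − a/b| > N(β)/(b·N(α))`. -/
theorem strict_boundary_slope_near_and_far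
    {J : Type*} [Fintype J] [Nonempty J]
    (m : J → ℝ) (hm : ∀ j, 0 < m j)
    (w : J → ℤ × ℤ) (hw : ∀ j, Int.gcd (w j).1 (w j).2 = 1)
    (hnorm : ∃ j k, Dd (toR (w j)) (toR (w k)) ≠ 0)
    (N : (ℝ × ℝ) → ℝ) (hN : ∀ v, N v = ∑ j, m j * |Dd v (toR (w j))|)
    (a b : ℤ) (hb : 1 ≤ b)
    (j₀ : J)
    (hne : N (toR (1, 0)) * |Dd (toR (a, b)) (toR (w j₀))| ≠
      N (toR (a, b)) * |Dd (toR (1, 0)) (toR (w j₀))|) :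
    (∃ j, (w j).2 ≠ 0 ∧
        |((w j).1 : ℝ) / ((w j).2 : ℝ) - (a : ℝ) / (b : ℝ)| <
          N (toR (a, b)) / ((b : ℝ) * N (toR (1, 0)))) ∧
    (∃ k, (w k).2 = 0 ∨ ((w k).2 ≠ 0 ∧
        N (toR (a, b)) / ((b : ℝ) * N (toR (1, 0))) <
          |((w k).1 : ℝ) / ((w k).2 : ℝ) - (a : ℝ) / (b : ℝ)|)) := by
  classical
  have hbR : (0:ℝ) < (b:ℝ) := by exact_mod_cast hb
  have hDα : ∀ j, Dd (toR (1,0)) (toR (w j)) = ((w j).2 : ℝ) := by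
    intro j; simp [Dd, toR]
  have hDβ : ∀ j, Dd (toR (a,b)) (toR (w j)) =
      (a:ℝ) * ((w j).2 : ℝ) - (b:ℝ) * ((w j).1 : ℝ) := by
    intro j; simp [Dd, toR]
  set A := N (toR (1,0)) with hAdef
  set B := N (toR (a,b)) with hBdef
  -- A > 0
  have hApos : 0 < A := by
    obtain ⟨j, k, hjk⟩ := hnorm
    have hq : ((w j).2 : ℝ) ≠ 0 ∨ ((w k).2 : ℝ) ≠ 0 := by
      by_contra h
      push_neg at h
      apply hjk
      simp [Dd, toR, h.1, h.2]
    obtain ⟨i, hi⟩ : ∃ i, ((w i).2 : ℝ) ≠ 0 := by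
      rcases hq with h | h
      · exact ⟨j, h⟩
      · exact ⟨k, h⟩
    rw [hAdef, hN]
    apply Finset.sum_pos'
    · intro l _
      exact mul_nonneg (hm l).le (abs_nonneg _)
    · refine ⟨i, Finset.mem_univ i, ?_⟩
      apply mul_pos (hm i)
      rw [hDα, abs_pos]
      exact hi
  -- the balancing function
  set f : J → ℝ := fun j => A * |Dd (toR (a,b)) (toR (w j))|
      - B * |Dd (toR (1,0)) (toR (w j))| with hf
  have hsum : ∑ j, m j * f j = 0 := by
    have : ∑ j, m j * f j =
        A * (∑ j, m j * |Dd (toR (a,b)) (toR (w j))|)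
        - B * (∑ j, m j * |Dd (toR (1,0)) (toR (w j))|) := by
      rw [Finset.mul_sum, Finset.mul_sum, ← Finset.sum_sub_distrib]
      apply Finset.sum_congr rfl
      intro j _
      simp [hf]; ring
    rw [this, ← hN, ← hN, ← hAdef, ← hBdef]
    ring
  have hfj₀ : f j₀ ≠ 0 := sub_ne_zero.mpr hne
  -- existence of negative and positive values of f
  have hneg : ∃ j, f j < 0 := by
    by_contra h
    push_neg at h
    have : 0 < ∑ j, m j * f j := by
      apply Finset.sum_pos'
      · intro l _
        exact mul_nonneg (hm l).le (h l)
      · refine ⟨j₀, Finset.mem_univ j₀, ?_⟩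
        exact mul_pos (hm j₀) (lt_of_le_of_ne (h j₀) (Ne.symm hfj₀))
    linarith [hsum]
  have hpos : ∃ k, 0 < f k := by
    by_contra h
    push_neg at h
    have heq : ∑ j, m j * (-(f j)) = - ∑ j, m j * f j := by
      simp [mul_neg]
    have h2 : 0 < ∑ j, m j * (-(f j)) := by
      apply Finset.sum_pos'
      · intro l _
        exact mul_nonneg (hm l).le (by linarith [h l])
      · refine ⟨j₀, Finset.mem_univ j₀, ?_⟩
        apply mul_pos (hm j₀)
        have := lt_of_le_of_ne (h j₀) hfj₀
        linarith
    rw [heq, hsum] at h2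
    linarith
  constructor
  · obtain ⟨j, hj⟩ := hneg
    rw [hf] at hj
    simp only [hDα, hDβ] at hj
    set p := ((w j).1 : ℝ)
    set q := ((w j).2 : ℝ)
    have hqne : q ≠ 0 := by
      intro h
      rw [h] at hj
      simp at hj
      have := mul_nonneg hApos.le (mul_nonneg (abs_nonneg (b:ℝ)) (abs_nonneg p))
      linarith
    have hq0 : (w j).2 ≠ 0 := by
      intro h; apply hqne; simp [q, h]
    refine ⟨j, hq0, ?_⟩
    have hrw : p / q - (a:ℝ) / (b:ℝ) = ((b:ℝ) * p - (a:ℝ) * q) / ((b:ℝ) * q) := by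
      field_simp
    rw [hrw, abs_div, abs_mul, abs_of_pos hbR]
    rw [div_lt_div_iff₀ (by positivity) (by positivity)]
    have habs : |(b:ℝ) * p - (a:ℝ) * q| = |(a:ℝ) * q - (b:ℝ) * p| := abs_sub_comm _ _
    rw [habs]
    nlinarith [abs_nonneg ((a:ℝ) * q - (b:ℝ) * p), abs_nonneg q]
  · obtain ⟨k, hk⟩ := hpos
    rw [hf] at hk
    simp only [hDα, hDβ] at hk
    by_cases hq0 : (w k).2 = 0
    · exact ⟨k, Or.inl hq0⟩
    refine ⟨k, Or.inr ⟨hq0, ?_⟩⟩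
    set p := ((w k).1 : ℝ)
    set q := ((w k).2 : ℝ)
    have hqne : q ≠ 0 := by
      simpa [q] using (Int.cast_ne_zero (α := ℝ)).mpr hq0
    have hrw : p / q - (a:ℝ) / (b:ℝ) = ((b:ℝ) * p - (a:ℝ) * q) / ((b:ℝ) * q) := by
      field_simp
    rw [hrw, abs_div, abs_mul, abs_of_pos hbR]
    rw [div_lt_div_iff₀ (by positivity) (by positivity)]
    have habs : |(b:ℝ) * p - (a:ℝ) * q| = |(a:ℝ) * q - (b:ℝ) * p| := abs_sub_comm _ _
    rw [habs]
    have hqpos : 0 < |q| := abs_pos.mpr hqne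
    nlinarith [abs_nonneg ((a:ℝ) * q - (b:ℝ) * p)]
end
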